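/- Let (X, Σ) be a measurable space, μ a measure on X, n ≥ 1 and k integers with 0 ≤ k ≤ n, and f, g : X → ℝ nonnegative measurable functions with ∫_X f dμ = ∫_X g dμ = 1. Let τ be a measure on X with τ(X) = 1 such that ∫_E f^(k/n) · g^((n−k)/n) dμ ≤ τ(E) for every measurable set E ⊆ X. Then the total variation distance between τ and the measure with density f with respect to μ satisfies ‖τ − f·μ‖(X) ≤ 2 (∫_X |f − g| dμ)^((n−k)/n). -/

import Mathlib

/-!
Write `κ = k/n`, `θ = (n-k)/n` and `σ = f·μ`. Since `τ` and `σ` both have mass one, the total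
variation of `τ - σ` is twice the largest excess `σ E - τ E`, read off on the negative set of a
Hahn decomposition. For every `E` the domination hypothesis gives
`σ E - τ E ≤ ∫_E (f - f^κ g^θ) dμ`, and `f - f^κ g^θ = f^κ (f^θ - g^θ) ≤ f^κ |f - g|^θ` by
subadditivity of `t ↦ t^θ`. Hölder's inequality with exponents `1/κ`, `1/θ` bounds the integral of
the right-hand side by `(∫ f)^κ (∫ |f - g|)^θ = (∫ |f - g|)^θ`.
-/

open MeasureTheory Real

namespace Real

theorem rpow_sub_rpow_le_abs_sub_rpow {a b p : ℝ} (ha : 0 ≤ a) (hb : 0 ≤ b)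
    (hp0 : 0 ≤ p) (hp1 : p ≤ 1) : a ^ p - b ^ p ≤ |a - b| ^ p := by
  rcases le_total a b with hab | hba
  · have : a ^ p ≤ b ^ p := rpow_le_rpow ha hab hp0
    linarith [rpow_nonneg (abs_nonneg (a - b)) p]
  · have hab : 0 ≤ a - b := sub_nonneg.2 hba
    have hsub := NNReal.rpow_add_le_add_rpow (a - b).toNNReal b.toNNReal hp0 hp1
    rw [← toNNReal_add hab hb, sub_add_cancel, ← NNReal.coe_le_coe] at hsub
    simp only [NNReal.coe_add, NNReal.coe_rpow, coe_toNNReal _ ha, coe_toNNReal _ hb,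
      coe_toNNReal _ hab] at hsub
    rw [abs_of_nonneg hab]
    linarith

theorem sub_rpow_mul_rpow_le {a b p q : ℝ} (ha : 0 ≤ a) (hb : 0 ≤ b) (hp : 0 ≤ p) (hq : 0 ≤ q)
    (hpq : p + q = 1) : a - a ^ p * b ^ q ≤ a ^ p * |a - b| ^ q := by
  have hsplit : a = a ^ p * a ^ q := by
    rw [← rpow_add' ha (by rw [hpq]; exact one_ne_zero), hpq, rpow_one]
  calc a - a ^ p * b ^ q = a ^ p * (a ^ q - b ^ q) := by rw [mul_sub, ← hsplit]
    _ ≤ a ^ p * |a - b| ^ q :=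
      mul_le_mul_of_nonneg_left (rpow_sub_rpow_le_abs_sub_rpow ha hb hq (by linarith))
        (rpow_nonneg ha p)

end Real

namespace MeasureTheory

variable {α : Type*} [MeasurableSpace α] {μ : Measure α} {u v : α → ℝ} {p q : ℝ}

theorem Integrable.rpow_mul_rpow (hu : Integrable u μ) (hv : Integrable v μ)
    (hu0 : 0 ≤ᵐ[μ] u) (hv0 : 0 ≤ᵐ[μ] v) (hp : 0 ≤ p) (hq : 0 ≤ q) (hpq : p + q = 1) :
    Integrable (fun x => u x ^ p * v x ^ q) μ := by
  refine ((hu.const_mul p).add (hv.const_mul q)).mono'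
    ((hu.aemeasurable.pow_const p).mul (hv.aemeasurable.pow_const q)).aestronglyMeasurable ?_
  filter_upwards [hu0, hv0] with x hux hvx
  rw [norm_of_nonneg (mul_nonneg (rpow_nonneg hux p) (rpow_nonneg hvx q))]
  exact geom_mean_le_arith_mean2_weighted hp hq hux hvx hpq

theorem integral_rpow_mul_rpow_le (hu : Integrable u μ) (hv : Integrable v μ)
    (hu0 : 0 ≤ᵐ[μ] u) (hv0 : 0 ≤ᵐ[μ] v) (hp : 0 ≤ p) (hq : 0 ≤ q) (hpq : p + q = 1) :
    ∫ x, u x ^ p * v x ^ q ∂μ ≤ (∫ x, u x ∂μ) ^ p * (∫ x, v x ∂μ) ^ q := by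
  have huv0 : 0 ≤ᵐ[μ] fun x => u x ^ p * v x ^ q := by
    filter_upwards [hu0, hv0] with x hux hvx
    exact mul_nonneg (rpow_nonneg hux p) (rpow_nonneg hvx q)
  rw [integral_eq_lintegral_of_nonneg_ae huv0
      (hu.rpow_mul_rpow hv hu0 hv0 hp hq hpq).aestronglyMeasurable,
    integral_eq_lintegral_of_nonneg_ae hu0 hu.aestronglyMeasurable,
    integral_eq_lintegral_of_nonneg_ae hv0 hv.aestronglyMeasurable,
    ENNReal.toReal_rpow, ENNReal.toReal_rpow, ← ENNReal.toReal_mul]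
  refine ENNReal.toReal_mono (ENNReal.mul_ne_top
    (ENNReal.rpow_ne_top_of_nonneg hp hu.lintegral_lt_top.ne)
    (ENNReal.rpow_ne_top_of_nonneg hq hv.lintegral_lt_top.ne)) ?_
  calc ∫⁻ x, ENNReal.ofReal (u x ^ p * v x ^ q) ∂μ
      = ∫⁻ x, ENNReal.ofReal (u x) ^ p * ENNReal.ofReal (v x) ^ q ∂μ := by
        refine lintegral_congr_ae ?_
        filter_upwards [hu0, hv0] with x hux hvx
        rw [ENNReal.ofReal_rpow_of_nonneg hux hp, ENNReal.ofReal_rpow_of_nonneg hvx hq,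
          ENNReal.ofReal_mul (rpow_nonneg hux p)]
    _ ≤ _ := ENNReal.lintegral_mul_norm_pow_le hu.aemeasurable.ennreal_ofReal
        hv.aemeasurable.ennreal_ofReal hp hq hpq

theorem setIntegral_sub_setIntegral_rpow_mul_rpow_le (hu : Integrable u μ) (hv : Integrable v μ)
    (hu0 : 0 ≤ᵐ[μ] u) (hv0 : 0 ≤ᵐ[μ] v) (hp : 0 ≤ p) (hq : 0 ≤ q) (hpq : p + q = 1) (E : Set α) :
    ∫ x in E, u x ∂μ - ∫ x in E, u x ^ p * v x ^ q ∂μ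
      ≤ (∫ x, u x ∂μ) ^ p * (∫ x, |u x - v x| ∂μ) ^ q := by
  have huv_int : Integrable (fun x => |u x - v x|) μ := (hu.sub hv).abs
  have huv0 : 0 ≤ᵐ[μ] fun x => |u x - v x| := ae_of_all _ fun x => abs_nonneg _
  have hF_int := hu.rpow_mul_rpow huv_int hu0 huv0 hp hq hpq
  have hG_int := hu.rpow_mul_rpow hv hu0 hv0 hp hq hpq
  calc ∫ x in E, u x ∂μ - ∫ x in E, u x ^ p * v x ^ q ∂μ
      = ∫ x in E, (u x - u x ^ p * v x ^ q) ∂μ :=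
        (integral_sub hu.restrict hG_int.restrict).symm
    _ ≤ ∫ x in E, u x ^ p * |u x - v x| ^ q ∂μ := by
        refine integral_mono_ae (hu.restrict.sub hG_int.restrict) hF_int.restrict ?_
        filter_upwards [ae_restrict_of_ae hu0, ae_restrict_of_ae hv0] with x hux hvx
        exact sub_rpow_mul_rpow_le hux hvx hp hq hpq
    _ ≤ ∫ x, u x ^ p * |u x - v x| ^ q ∂μ := by
        refine setIntegral_le_integral hF_int ?_
        filter_upwards [hu0] with x hux
        exact mul_nonneg (rpow_nonneg hux p) (rpow_nonneg (abs_nonneg _) q)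
    _ ≤ (∫ x, u x ∂μ) ^ p * (∫ x, |u x - v x| ∂μ) ^ q :=
        integral_rpow_mul_rpow_le hu huv_int hu0 huv0 hp hq hpq

theorem measureReal_withDensity_ofReal (hu : Integrable u μ) (hu0 : 0 ≤ᵐ[μ] u) {E : Set α}
    (hE : MeasurableSet E) :
    (μ.withDensity fun x => ENNReal.ofReal (u x)).real E = ∫ x in E, u x ∂μ := by
  rw [measureReal_def, withDensity_apply _ hE,
    ← ofReal_integral_eq_lintegral_ofReal hu.restrict (ae_restrict_of_ae hu0),
    ENNReal.toReal_ofReal (integral_nonneg_of_ae (ae_restrict_of_ae hu0))]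

theorem SignedMeasure.totalVariation_real_univ_le_two_mul {s : SignedMeasure α}
    (hs : s Set.univ = 0) {c : ℝ} (hc : ∀ E, MeasurableSet E → -s E ≤ c) :
    s.totalVariation.real Set.univ ≤ 2 * c := by
  obtain ⟨i, hi, hpos, hneg, hposPart, hnegPart⟩ := s.toJordanDecomposition_spec
  have htv : s.totalVariation.real Set.univ = s i - s iᶜ := by
    rw [measureReal_def, SignedMeasure.totalVariation, Measure.add_apply, hposPart, hnegPart,
      SignedMeasure.toMeasureOfZeroLE_apply _ hpos hi MeasurableSet.univ,
      SignedMeasure.toMeasureOfLEZero_apply _ hneg hi.compl MeasurableSet.univ,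
      ← ENNReal.coe_add, ENNReal.coe_toReal, NNReal.coe_add, NNReal.coe_mk, NNReal.coe_mk,
      Set.inter_univ, Set.inter_univ]
    ring
  have hsplit : s i + s iᶜ = 0 := by
    rw [← VectorMeasure.of_union disjoint_compl_right hi hi.compl, Set.union_compl_self, hs]
  linarith [hc iᶜ hi.compl]

end MeasureTheory

theorem abstract_lemma_2_6_totalVariation_general {X : Type*} [MeasurableSpace X] (μ : Measure X)
    (n k : ℕ) (hn : 1 ≤ n) (hk : k ≤ n)
    (f g : X → ℝ)
    (hf0 : ∀ x, 0 ≤ f x) (hg0 : ∀ x, 0 ≤ g x)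
    (hf_int : Integrable f μ) (hg_int : Integrable g μ)
    (hf1 : ∫ x, f x ∂μ = 1)
    (τ : Measure X) [IsFiniteMeasure τ] (hτ1 : τ Set.univ = 1)
    (hdom : ∀ E : Set X, MeasurableSet E →
      ∫ x in E, f x ^ ((k : ℝ) / n) * g x ^ (((n : ℝ) - k) / n) ∂μ ≤ (τ E).toReal) :
    ((τ.toSignedMeasure -
        @Measure.toSignedMeasure X _ (μ.withDensity fun x => ENNReal.ofReal (f x))
          (isFiniteMeasure_withDensity_ofReal hf_int.hasFiniteIntegral)).totalVariation
      Set.univ).toReal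
      ≤ 2 * (∫ x, |f x - g x| ∂μ) ^ (((n : ℝ) - k) / n) := by
  set κ : ℝ := (k : ℝ) / n
  set θ : ℝ := ((n : ℝ) - k) / n
  have hn₀ : (0 : ℝ) < n := by exact_mod_cast hn
  have hκ : 0 ≤ κ := by positivity
  have hθ : 0 ≤ θ := div_nonneg (sub_nonneg.2 (by exact_mod_cast hk)) hn₀.le
  have hκθ : κ + θ = 1 := by rw [← add_div, add_sub_cancel, div_self hn₀.ne']
  have hf0' : 0 ≤ᵐ[μ] f := ae_of_all _ hf0
  have := isFiniteMeasure_withDensity_ofReal (μ := μ) hf_int.hasFiniteIntegral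
  refine SignedMeasure.totalVariation_real_univ_le_two_mul ?_ fun E hE => ?_
  · rw [Measure.toSignedMeasure_sub_apply MeasurableSet.univ,
      measureReal_withDensity_ofReal hf_int hf0' MeasurableSet.univ, Measure.restrict_univ, hf1,
      measureReal_def, hτ1, ENNReal.toReal_one, sub_self]
  have hexcess := setIntegral_sub_setIntegral_rpow_mul_rpow_le hf_int hg_int hf0'
    (ae_of_all _ hg0) hκ hθ hκθ E
  rw [hf1, one_rpow, one_mul] at hexcess
  rw [Measure.toSignedMeasure_sub_apply hE, measureReal_withDensity_ofReal hf_int hf0' hE,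
    measureReal_def]
  linarith [hdom E hE]

/-- Abstract measure-theoretic form of the conclusion of Lemma 2.6: if `f, g ≥ 0` are
measurable with `∫ f dμ = ∫ g dμ = 1`, and `τ` is a measure of total mass `1` dominating
the measure with density `f^(k/n) g^((n−k)/n)` with respect to `μ`, then the total
variation of the signed measure `τ − f·μ` satisfies
`‖τ − f·μ‖(X) ≤ 2 (∫_X |f − g| dμ)^((n−k)/n)`. -/
theorem abstract_lemma_2_6_totalVariation {X : Type*} [MeasurableSpace X] (μ : Measure X)
    (n k : ℕ) (hn : 1 ≤ n) (hk : k ≤ n)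
    (f g : X → ℝ) (hf_meas : Measurable f) (hg_meas : Measurable g)
    (hf0 : ∀ x, 0 ≤ f x) (hg0 : ∀ x, 0 ≤ g x)
    (hf_int : Integrable f μ) (hg_int : Integrable g μ)
    (hf1 : ∫ x, f x ∂μ = 1) (hg1 : ∫ x, g x ∂μ = 1)
    (τ : Measure X) [IsFiniteMeasure τ] (hτ1 : τ Set.univ = 1)
    (hdom : ∀ E : Set X, MeasurableSet E →
      ∫ x in E, f x ^ ((k : ℝ) / n) * g x ^ (((n : ℝ) - k) / n) ∂μ ≤ (τ E).toReal) :
    ((τ.toSignedMeasure -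
        @Measure.toSignedMeasure X _ (μ.withDensity fun x => ENNReal.ofReal (f x))
          (isFiniteMeasure_withDensity_ofReal hf_int.hasFiniteIntegral)).totalVariation
      Set.univ).toReal
      ≤ 2 * (∫ x, |f x - g x| ∂μ) ^ (((n : ℝ) - k) / n) :=
  abstract_lemma_2_6_totalVariation_general μ n k hn hk f g hf0 hg0 hf_int hg_int hf1 τ hτ1 hdom
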